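/- arXiv:2201.06634 — 2 statements merged into one kernel-verified Lean document; each statement's English description precedes it below -/
import Mathlib

section
/- Let H be an ℵ₁-free abelian group of cardinality ℵ₁ with ℵ₁-filtration {H_α : α < ω₁}, and suppose the set {α < ω₁ : H/H_α is ℵ₁-free} is unbounded in ω₁. Then the set P' = {p ⊆ H : p is a basis of H_α for some α < ω₁ with H/H_α ℵ₁-free} is a dense subset of the poset (P_pb, ≤): for every p ∈ P_pb there exists α < ω₁ with H/H_α ℵ₁-free and a basis q of H_α with p ⊆ q. -/
/-- An abelian group is ℵ₁-free if every countable subgroup is free (as a ℤ-module). -/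
def Aleph1Free (H : Type*) [AddCommGroup H] : Prop :=
  ∀ K : AddSubgroup H, Countable K → Module.Free ℤ K

/-- The first uncountable ordinal ω₁. -/
noncomputable def omega1 : Ordinal := (Cardinal.aleph 1).ord

/-- `C` is a club in `o`: a subset of `o` closed under suprema of its bounded
nonempty subsets and unbounded in `o`. -/
def IsClubIn (C : Set Ordinal) (o : Ordinal) : Prop :=
  (∀ α ∈ C, α < o) ∧
  (∀ S : Set Ordinal, S ⊆ C → S.Nonempty → (∃ β < o, ∀ x ∈ S, x ≤ β) → sSup S ∈ C) ∧
  (∀ α < o, ∃ β ∈ C, α < β)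

/-- `F` (restricted to ordinals `< ω₁`) is an ℵ₁-filtration of `H`. -/
def IsAleph1Filtration {H : Type*} [AddCommGroup H] (F : Ordinal → AddSubgroup H) : Prop :=
  (∀ α < omega1, Countable (F α)) ∧
  (∀ α β : Ordinal, α ≤ β → β < omega1 → F α ≤ F β) ∧
  (∀ α < omega1, Order.IsSuccLimit α → ∀ x : H, x ∈ F α ↔ ∃ β < α, x ∈ F β) ∧
  (∀ x : H, ∃ α < omega1, x ∈ F α)

/-- The forcing poset of partial bases. -/
def Ppb (H : Type*) [AddCommGroup H] : Set (Set H) :=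
  {p | LinearIndependent ℤ ((↑) : p → H) ∧ p.Countable ∧
    Aleph1Free (H ⧸ AddSubgroup.closure p)}
/-- `q` is a basis of the subgroup `K`: `q` is linearly independent and generates `K`. -/
def IsBasisOfSubgroup {H : Type*} [AddCommGroup H] (q : Set H) (K : AddSubgroup H) : Prop :=
  LinearIndependent ℤ ((↑) : q → H) ∧ AddSubgroup.closure q = K

/-!
A countable `p ∈ P_pb` lies in some `H_β`, and by unboundedness in some `H_α ⊇ H_β` with
`H/H_α` ℵ₁-free. Since `p ⊆ H_α`, the quotient `H_α/⟨p⟩` embeds into the ℵ₁-free group `H/⟨p⟩`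
and is countable, hence free. Lifting a basis of `H_α/⟨p⟩` to `H_α` and adjoining it to `p`
gives a basis of `H_α` containing `p`.
-/

open Submodule in
theorem LinearIndepOn.exists_superset_span_eq_top_of_free_quotient {R M : Type*} [Ring R]
    [AddCommGroup M] [Module R M] {s : Set M} (hs : LinearIndepOn R id s)
    [Module.Free R (M ⧸ span R s)] :
    ∃ t, s ⊆ t ∧ LinearIndepOn R id t ∧ span R t = ⊤ := by
  let b := Module.Free.chooseBasis R (M ⧸ span R s)
  choose w hw using fun i ↦ (span R s).mkQ_surjective (b i)
  have hmkQw : (span R s).mkQ ∘ w = b := funext hw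
  have hwli : LinearIndependent R w := .of_comp _ (hmkQw ▸ b.linearIndependent)
  refine ⟨s ∪ Set.range w, Set.subset_union_left, hs.id_union hwli.linearIndepOn_id ?_, ?_⟩
  · simpa using (range_ker_disjoint (f := (span R s).mkQ) (hmkQw ▸ b.linearIndependent)).symm
  · rw [span_union, ← map_mkQ_eq_top, map_span, ← Set.range_comp, hmkQw, b.span_eq]

theorem exists_isBasisOfSubgroup_superset {H : Type*} [AddCommGroup H] {K : AddSubgroup H}
    {p : Set H} (hpK : p ⊆ K) (hp : LinearIndepOn ℤ id p)
    [Module.Free ℤ (K ⧸ Submodule.span ℤ (K.subtype ⁻¹' p))] :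
    ∃ q, IsBasisOfSubgroup q K ∧ p ⊆ q := by
  have himage : K.subtype '' (K.subtype ⁻¹' p) = p :=
    Set.image_preimage_eq_of_subset (by simpa using hpK)
  have hs : LinearIndepOn ℤ id (K.subtype ⁻¹' p) :=
    .of_comp K.subtype.toIntLinearMap <|
      (himage ▸ hp).comp_of_image Subtype.val_injective.injOn
  obtain ⟨t, hst, ht, hspan⟩ := hs.exists_superset_span_eq_top_of_free_quotient
  refine ⟨K.subtype '' t, ⟨ht.image (f := K.subtype.toIntLinearMap) (by simp), ?_⟩,
    himage ▸ Set.image_mono hst⟩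
  rw [← AddMonoidHom.map_closure, ← Submodule.span_int_eq_addSubgroupClosure, hspan]
  simp only [Submodule.top_toAddSubgroup, ← AddMonoidHom.range_eq_map, AddSubgroup.range_subtype]

theorem Aleph1Free.free_of_injective {G A : Type*} [AddCommGroup G] [AddCommGroup A]
    [Countable A] (hG : Aleph1Free G) {f : A →+ G} (hf : Function.Injective f) :
    Module.Free ℤ A :=
  have : Countable f.range := f.rangeRestrict_surjective.countable
  have := hG f.range this
  .of_equiv (AddMonoidHom.ofInjective hf).symm.toIntLinearEquiv

theorem Aleph1Free.free_quotient_span_preimage {H : Type*} [AddCommGroup H] {p : Set H}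
    (hp : Aleph1Free (H ⧸ AddSubgroup.closure p)) {K : AddSubgroup H} [Countable K]
    (hpK : p ⊆ K) : Module.Free ℤ (K ⧸ Submodule.span ℤ (K.subtype ⁻¹' p)) := by
  let φ : K →ₗ[ℤ] H ⧸ AddSubgroup.closure p :=
    ((QuotientAddGroup.mk' _).comp K.subtype).toIntLinearMap
  have hker : LinearMap.ker φ = Submodule.span ℤ (K.subtype ⁻¹' p) := by
    have hclosure :
        AddSubgroup.closure p = (AddSubgroup.closure (K.subtype ⁻¹' p)).map K.subtype := by
      rw [AddMonoidHom.map_closure, Set.image_preimage_eq_of_subset (by simpa using hpK)]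
    ext x
    simp only [φ, LinearMap.mem_ker, AddMonoidHom.coe_toIntLinearMap, AddMonoidHom.comp_apply,
      QuotientAddGroup.mk'_apply, QuotientAddGroup.eq_zero_iff]
    rw [hclosure, AddSubgroup.mem_map_iff_mem K.subtype_injective,
      ← Submodule.span_int_eq_addSubgroupClosure, Submodule.mem_toAddSubgroup]
  have : Countable (K ⧸ Submodule.span ℤ (K.subtype ⁻¹' p)) := Quotient.countable
  exact hp.free_of_injective (f := (Submodule.liftQ _ φ hker.ge).toAddMonoidHom)
    (LinearMap.ker_eq_bot.1 (Submodule.ker_liftQ_eq_bot _ _ _ hker.le))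

theorem iSup_lt_omega1_of_countable {ι : Type*} [Countable ι] {f : ι → Ordinal}
    (hf : ∀ i, f i < omega1) : ⨆ i, f i < omega1 := by
  refine Ordinal.lift_iSup_lt_of_lt_cof ?_ hf
  rw [omega1, ← Ordinal.lift_cof, Cardinal.isRegular_aleph_one.cof_ord,
    Cardinal.lift_aleph, Ordinal.lift_one]
  exact (Cardinal.lift_le_aleph0.2 Cardinal.mk_le_aleph0).trans_lt Cardinal.aleph0_lt_aleph_one

theorem IsAleph1Filtration.exists_lt_omega1_subset {H : Type*} [AddCommGroup H]
    {F : Ordinal → AddSubgroup H} (hF : IsAleph1Filtration F) {p : Set H} (hp : p.Countable) :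
    ∃ β < omega1, p ⊆ F β := by
  have := hp.to_subtype
  choose γ hγ hmem using hF.2.2.2
  have hβ : ⨆ x : p, γ x < omega1 := iSup_lt_omega1_of_countable fun x ↦ hγ x
  have hbdd : BddAbove (Set.range fun x : p ↦ γ x) :=
    ⟨omega1, Set.forall_mem_range.2 fun x ↦ (hγ x).le⟩
  exact ⟨_, hβ, fun x hx ↦ hF.2.1 _ _ (le_ciSup hbdd ⟨x, hx⟩) hβ (hmem x)⟩

theorem P'_dense_general {H : Type*} [AddCommGroup H]
    (F : Ordinal → AddSubgroup H) (hF : IsAleph1Filtration F)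
    (hunbdd : ∀ β < omega1, ∃ α : Ordinal, α < omega1 ∧ β ≤ α ∧ Aleph1Free (H ⧸ F α)) :
    ∀ p ∈ Ppb H, ∃ α : Ordinal, α < omega1 ∧ Aleph1Free (H ⧸ F α) ∧
      ∃ q : Set H, IsBasisOfSubgroup q (F α) ∧ p ⊆ q := by
  rintro p ⟨hli, hcount, hfree⟩
  obtain ⟨β, hβ, hpβ⟩ := hF.exists_lt_omega1_subset hcount
  obtain ⟨α, hα, hβα, hαfree⟩ := hunbdd β hβ
  have hpα : p ⊆ F α := hpβ.trans (hF.2.1 β α hβα hα)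
  have := hF.1 α hα
  have := hfree.free_quotient_span_preimage hpα
  exact ⟨α, hα, hαfree, exists_isBasisOfSubgroup_superset hpα hli⟩

/-- If `{α < ω₁ : H/H_α is ℵ₁-free}` is unbounded in ω₁, then
`P' = {p : p is a basis of some H_α with H/H_α ℵ₁-free}` is dense in `(P_pb, ≤)`. -/
theorem P'_dense {H : Type*} [AddCommGroup H]
    (hH : Aleph1Free H) (hcard : Cardinal.mk H = Cardinal.aleph 1)
    (F : Ordinal → AddSubgroup H) (hF : IsAleph1Filtration F)
    (hunbdd : ∀ β < omega1, ∃ α : Ordinal, α < omega1 ∧ β ≤ α ∧ Aleph1Free (H ⧸ F α)) :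
    ∀ p ∈ Ppb H, ∃ α : Ordinal, α < omega1 ∧ Aleph1Free (H ⧸ F α) ∧
      ∃ q : Set H, IsBasisOfSubgroup q (F α) ∧ p ⊆ q :=
  P'_dense_general F hF hunbdd
end

section
/- Let H be an ℵ₁-free abelian group of cardinality ℵ₁ and let B be a basis of H (so in particular H is free). Then the set D = {p ∈ P_pb : p ⊄ B} is dense in the poset (P_pb, ≤): for every q ∈ P_pb there exists p ∈ P_pb with q ⊆ p and p not a subset of B. -/
/-! If `q ⊆ B`, pick `b ∈ B \ q`, which exists because `B` is uncountable (`|H| = ℵ₁`) while `q`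
is countable. Replacing `b` by `-b` in `B` gives another basis of `H` containing `q ∪ {-b}`, and
`-b ∉ B`. For any part `p` of a basis, `H ⧸ ⟨p⟩` is isomorphic to the span of the rest of the
basis, a subgroup of `H`, so it inherits ℵ₁-freeness from `H`. -/

theorem Aleph1Free.of_injective {G H : Type*} [AddCommGroup G] [AddCommGroup H]
    (hH : Aleph1Free H) (f : G →+ H) (hf : Function.Injective f) : Aleph1Free G := by
  intro K hK
  let e := K.equivMapOfInjective f hf
  have := hH (K.map f) (Countable.of_equiv K e.toEquiv)
  exact Module.Free.of_equiv e.symm.toIntLinearEquiv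

theorem Aleph1Free.quotient_closure_of_subset_range {H ι : Type*} [AddCommGroup H]
    (hH : Aleph1Free H) (c : Module.Basis ι ℤ H) {p : Set H} (hp : p ⊆ Set.range c) :
    Aleph1Free (H ⧸ AddSubgroup.closure p) := by
  obtain ⟨S, rfl⟩ := Set.subset_range_iff_exists_image_eq.1 hp
  have hcompl := c.linearIndependent.isCompl_span_image c.span_eq isCompl_compl (s := S)
  let e : H ⧸ AddSubgroup.closure (c '' S) ≃+ Submodule.span ℤ (c '' Sᶜ) :=
    (QuotientAddGroup.quotientAddEquivOfEq (Submodule.span_int_eq_addSubgroupClosure _).symm).trans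
      (Submodule.quotientEquivOfIsCompl _ _ hcompl).toAddEquiv
  exact hH.of_injective ((Submodule.subtype _).toAddMonoidHom.comp e.toAddMonoidHom)
    (Subtype.val_injective.comp e.injective)

theorem Module.Basis.neg_notMem_range {ι R M : Type*} [Ring R] [NeZero (2 : R)] [AddCommGroup M]
    [Module R M] (b : Module.Basis ι R M) (i : ι) : -b i ∉ Set.range b := by
  classical
  rintro ⟨j, hj⟩
  have hcoord := congr($(congrArg b.repr hj) i)
  apply two_ne_zero (α := R)
  rw [← one_add_one_eq_two]
  by_cases hji : j = i
  · subst hji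
    simp only [Module.Basis.repr_self, map_neg, Finsupp.coe_neg, Pi.neg_apply,
      Finsupp.single_eq_same] at hcoord
    nth_rw 1 [hcoord, neg_add_cancel]
  · simp [hji] at hcoord
    rw [hcoord, add_zero]

theorem Module.Basis.range_unitsSMul_neg {ι R M : Type*} [Ring R] [AddCommGroup M] [Module R M]
    [DecidableEq ι] (b : Module.Basis ι R M) (i : ι) :
    Set.range (b.unitsSMul (fun j => if j = i then -1 else 1)) = insert (-b i) (b '' {i}ᶜ) := by
  ext x
  simp only [Set.mem_range, Module.Basis.unitsSMul_apply, Set.mem_insert_iff, Set.mem_image]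
  constructor
  · rintro ⟨j, rfl⟩
    by_cases hji : j = i
    · simp [hji]
    · exact Or.inr ⟨j, hji, by simp [hji]⟩
  · rintro (rfl | ⟨j, hji, rfl⟩)
    · exact ⟨i, by simp⟩
    · exact ⟨j, by simp [Set.mem_compl_singleton_iff.1 hji]⟩

theorem mem_Ppb_of_subset_range_basis {H ι : Type*} [AddCommGroup H] (hH : Aleph1Free H)
    (c : Module.Basis ι ℤ H) {p : Set H} (hp : p ⊆ Set.range c) (hpc : p.Countable) :
    p ∈ Ppb H :=
  ⟨((linearIndepOn_id_range_iff c.injective).2 c.linearIndependent).mono hp, hpc,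
    hH.quotient_closure_of_subset_range c hp⟩

/-- If `B` is a basis of `H`, then `D = {p ∈ P_pb : p ⊄ B}` is dense in
`(P_pb, ≤)`. -/
theorem D_notSubsetBasis_dense {H : Type*} [AddCommGroup H]
    (hH : Aleph1Free H) (hcard : Cardinal.mk H = Cardinal.aleph 1)
    (B : Set H) (hBindep : LinearIndependent ℤ ((↑) : B → H))
    (hBspan : AddSubgroup.closure B = ⊤) :
    ∀ q ∈ Ppb H, ∃ p ∈ Ppb H, q ⊆ p ∧ ¬ p ⊆ B := by
  classical
  intro q hq
  by_cases hqB : q ⊆ B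
  swap
  · exact ⟨q, hq, subset_rfl, hqB⟩
  have hspan : ⊤ ≤ Submodule.span ℤ (Set.range ((↑) : B → H)) := by
    rw [Subtype.range_coe, ← Submodule.toAddSubgroup_le, Submodule.span_int_eq_addSubgroupClosure,
      hBspan]
    exact le_rfl
  let b₀ : Module.Basis B ℤ H := .mk hBindep hspan
  have hb₀ : ⇑b₀ = (↑) := Module.Basis.coe_mk hBindep hspan
  have hBunc : ¬ B.Countable := fun hB => by
    have := hB.to_subtype
    have : Countable H := Countable.of_equiv _ b₀.repr.toEquiv.symm
    exact Cardinal.aleph0_lt_aleph_one.not_ge (hcard ▸ Cardinal.mk_le_aleph0)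
  obtain ⟨b, hbB, hbq⟩ := Set.nonempty_of_not_subset fun hBq => hBunc (hq.2.1.mono hBq)
  let i : B := ⟨b, hbB⟩
  have hqc : insert (-b) q ⊆ Set.range (b₀.unitsSMul fun j => if j = i then -1 else 1) := by
    rw [b₀.range_unitsSMul_neg i, hb₀]
    refine Set.insert_subset_insert fun y hy => ?_
    have hyb : y ≠ b := fun h => hbq (h ▸ hy)
    exact ⟨⟨y, hqB hy⟩, fun h => hyb (congrArg Subtype.val h), rfl⟩
  refine ⟨insert (-b) q, mem_Ppb_of_subset_range_basis hH _ hqc (hq.2.1.insert _),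
    Set.subset_insert _ _, fun hpB => b₀.neg_notMem_range i ?_⟩
  rw [hb₀, Subtype.range_coe]
  exact hpB (Set.mem_insert _ _)
end
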